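/- The minimum height among all directed elimination forests for a digraph G equals the cycle rank of G. -/

import Mathlib

open scoped Classical

variable {V : Type*}

/-- `b` is reachable from `a` by a (possibly empty) directed path staying inside `S`. -/
def ReachIn (E : V → V → Prop) (S : Finset V) (a b : V) : Prop :=
  Relation.ReflTransGen (fun x y => x ∈ S ∧ y ∈ S ∧ E x y) a b

/-- The induced subdigraph `G[S]` is strongly connected. -/
def StronglyConnIn (E : V → V → Prop) (S : Finset V) : Prop :=
  ∀ a ∈ S, ∀ b ∈ S, ReachIn E S a b

/-- The induced subdigraph `G[S]` contains at least one edge. -/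
def HasEdgeIn (E : V → V → Prop) (S : Finset V) : Prop :=
  ∃ a ∈ S, ∃ b ∈ S, E a b

/-- `G[S]` is acyclic: every strongly connected component of `G[S]` is trivial,
equivalently there is no edge lying on a closed walk inside `S`. -/
def AcyclicIn (E : V → V → Prop) (S : Finset V) : Prop :=
  ¬ ∃ a ∈ S, ∃ b ∈ S, E a b ∧ ReachIn E S b a

open Classical in
/-- The strongly connected component of `v` in the induced subdigraph `G[S]`. -/
noncomputable def sccOf [DecidableEq V] (E : V → V → Prop) (S : Finset V) (v : V) : Finset V :=
  S.filter (fun u => ReachIn E S v u ∧ ReachIn E S u v)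

open Classical in
/-- Fuel-based auxiliary function implementing the recursive definition of cycle rank. -/
noncomputable def crankAux [DecidableEq V] (E : V → V → Prop) : ℕ → Finset V → ℕ
  | 0, _ => 0
  | n + 1, S =>
    if AcyclicIn E S then 0
    else if StronglyConnIn E S then
      1 + sInf {m | ∃ v ∈ S, crankAux E n (S.erase v) = m}
    else
      S.sup (fun v => crankAux E n (sccOf E S v))

/-- The cycle rank of the digraph `(V, E)`. -/
noncomputable def crank [DecidableEq V] [Fintype V] (E : V → V → Prop) : ℕ :=
  crankAux E (Fintype.card V) Finset.univ


/-- `ElimTreeHLe E x X h` holds iff there exists a directed elimination tree for the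
nontrivially strongly connected induced subdigraph `G[X]` with root `(x, X)` whose height
(number of nodes on a longest root-to-leaf path) is at most `h`. The children of a node
`(x, X)` are nodes `(y, Y)` for the nontrivial strongly connected components `Y` of `G[X] - x`. -/
inductive ElimTreeHLe {V : Type*} [DecidableEq V] (E : V → V → Prop) : V → Finset V → ℕ → Prop
  | node (x : V) (X : Finset V) (h : ℕ)
      (hx : x ∈ X) (hsc : StronglyConnIn E X) (hnt : HasEdgeIn E X)
      (y : V → V)
      (hmem : ∀ v ∈ X.erase x, HasEdgeIn E (sccOf E (X.erase x) v) →
        y v ∈ sccOf E (X.erase x) v)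
      (hch : ∀ v ∈ X.erase x, HasEdgeIn E (sccOf E (X.erase x) v) →
        ElimTreeHLe E (y v) (sccOf E (X.erase x) v) h) :
      ElimTreeHLe E x X (h + 1)

/-- There exists a directed elimination forest for `G` of height at most `h`:
for every nontrivial strongly connected component `C` of `G` there is a directed
elimination tree for `G[C]` of height at most `h`. -/
def ElimForestHLe {V : Type*} [DecidableEq V] [Fintype V] (E : V → V → Prop) (h : ℕ) : Prop :=
  ∀ v : V, HasEdgeIn E (sccOf E Finset.univ v) →
    ∃ x ∈ sccOf E Finset.univ v, ElimTreeHLe E x (sccOf E Finset.univ v) h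

/-! The fuel in `crankAux` is irrelevant once it is at least `|S|`, so cycle rank extends to
induced subdigraphs as `crankIn E S`. The cycle rank of `G[S]` is the maximum over the strongly
connected components of `G[S]`, and for strongly connected `G[X]` with an edge it is
`1 + min_x crank (G[X] - x)`. Hence the subtrees of an elimination tree of height `h + 1` rooted
at `(x, X)` show `crank (G[X] - x) ≤ h`, and conversely rooting the tree at a minimising `x` and
recursing into the components of `G[X] - x` gives a tree of height exactly `crank G[X]`. -/

section CycleRank

variable {E : V → V → Prop} {S T : Finset V}

theorem ReachIn.trans {a b c : V} (hab : ReachIn E S a b) (hbc : ReachIn E S b c) :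
    ReachIn E S a c :=
  Relation.ReflTransGen.trans hab hbc

theorem ReachIn.mono (hST : S ⊆ T) {a b : V} (h : ReachIn E S a b) : ReachIn E T a b :=
  Relation.ReflTransGen.mono (fun _ _ ⟨hx, hy, e⟩ => ⟨hST hx, hST hy, e⟩) _ _ h

theorem AcyclicIn.mono (hST : S ⊆ T) (h : AcyclicIn E T) : AcyclicIn E S :=
  fun ⟨a, ha, b, hb, e, hba⟩ => h ⟨a, hST ha, b, hST hb, e, hba.mono hST⟩

theorem acyclicIn_of_not_hasEdgeIn (h : ¬ HasEdgeIn E S) : AcyclicIn E S :=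
  fun ⟨a, ha, b, hb, e, _⟩ => h ⟨a, ha, b, hb, e⟩

theorem StronglyConnIn.not_acyclicIn (hsc : StronglyConnIn E S) (he : HasEdgeIn E S) :
    ¬ AcyclicIn E S := by
  obtain ⟨a, ha, b, hb, e⟩ := he
  exact fun hac => hac ⟨a, ha, b, hb, e, hsc b hb a ha⟩

theorem nonempty_of_not_acyclicIn (h : ¬ AcyclicIn E S) : S.Nonempty := by
  by_contra hS
  exact h fun ⟨a, ha, _⟩ => hS ⟨a, ha⟩

variable [DecidableEq V]

theorem mem_sccOf {v u : V} : u ∈ sccOf E S v ↔ u ∈ S ∧ ReachIn E S v u ∧ ReachIn E S u v := by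
  simp [sccOf]

theorem sccOf_subset (S : Finset V) (v : V) : sccOf E S v ⊆ S := Finset.filter_subset _ _

theorem ReachIn.restrict_sccOf {v a b : V} (hab : ReachIn E S a b) (hva : ReachIn E S v a)
    (hbv : ReachIn E S b v) : ReachIn E (sccOf E S v) a b := by
  induction hab using Relation.ReflTransGen.head_induction_on with
  | refl => exact .refl
  | @head a c hac hcb ih =>
    have hvc : ReachIn E S v c := Relation.ReflTransGen.tail hva hac
    have hcv : ReachIn E S c v := hcb.trans hbv
    have ha : a ∈ sccOf E S v :=
      mem_sccOf.2 ⟨hac.1, hva, Relation.ReflTransGen.head hac hcv⟩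
    have hc : c ∈ sccOf E S v := mem_sccOf.2 ⟨hac.2.1, hvc, hcv⟩
    exact .head ⟨ha, hc, hac.2.2⟩ (ih hvc)

theorem sccOf_stronglyConnIn (S : Finset V) (v : V) : StronglyConnIn E (sccOf E S v) := by
  intro a ha b hb
  obtain ⟨-, hva, hav⟩ := mem_sccOf.1 ha
  obtain ⟨-, hvb, hbv⟩ := mem_sccOf.1 hb
  exact (hav.trans hvb).restrict_sccOf hva hbv

theorem StronglyConnIn.sccOf_eq (hsc : StronglyConnIn E S) {v : V} (hv : v ∈ S) :
    sccOf E S v = S :=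
  (sccOf_subset S v).antisymm fun u hu => mem_sccOf.2 ⟨hu, hsc v hv u hu, hsc u hu v hv⟩

theorem sccOf_ssubset (hS : ¬ StronglyConnIn E S) (v : V) : sccOf E S v ⊂ S := by
  refine (sccOf_subset S v).ssubset_of_ne fun h => hS fun a ha b hb => ?_
  rw [← h] at ha hb
  exact (mem_sccOf.1 ha).2.2.trans (mem_sccOf.1 hb).2.1

theorem crankAux_of_acyclicIn (n : ℕ) (h : AcyclicIn E S) : crankAux E n S = 0 := by
  cases n <;> simp [crankAux, h]

theorem crankAux_congr_fuel {n m : ℕ} (hn : S.card ≤ n) (hm : S.card ≤ m) :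
    crankAux E n S = crankAux E m S := by
  induction n generalizing S m with
  | zero =>
    have hac : AcyclicIn E S := acyclicIn_of_not_hasEdgeIn fun ⟨a, ha, _⟩ =>
      Finset.card_ne_zero_of_mem ha (by omega)
    rw [crankAux_of_acyclicIn _ hac, crankAux_of_acyclicIn _ hac]
  | succ n ih =>
    by_cases hac : AcyclicIn E S
    · rw [crankAux_of_acyclicIn _ hac, crankAux_of_acyclicIn _ hac]
    have hpos := (nonempty_of_not_acyclicIn hac).card_pos
    obtain ⟨m, rfl⟩ : ∃ k, m = k + 1 := ⟨m - 1, by omega⟩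
    have hsub : ∀ {T}, T ⊂ S → T.card ≤ n ∧ T.card ≤ m := fun hT => by
      have := Finset.card_lt_card hT; omega
    simp only [crankAux, if_neg hac]
    split_ifs with hsc
    · have hfuel : ∀ v ∈ S, crankAux E n (S.erase v) = crankAux E m (S.erase v) := fun v hv =>
        ih (hsub (Finset.erase_ssubset hv)).1 (hsub (Finset.erase_ssubset hv)).2
      congr 2
      ext k
      simp only [Set.mem_ofPred_eq]
      refine exists_congr fun v => and_congr_right fun hv => ?_
      rw [hfuel v hv]
    · exact Finset.sup_congr rfl fun v hv =>
        ih (hsub (sccOf_ssubset hsc v)).1 (hsub (sccOf_ssubset hsc v)).2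

noncomputable def crankIn (E : V → V → Prop) (S : Finset V) : ℕ := crankAux E S.card S

theorem crank_eq_crankIn_univ [Fintype V] : crank E = crankIn E Finset.univ := by
  rw [crank, crankIn, Finset.card_univ]

theorem crankIn_of_acyclicIn (h : AcyclicIn E S) : crankIn E S = 0 :=
  crankAux_of_acyclicIn _ h

theorem crankIn_of_stronglyConnIn (hsc : StronglyConnIn E S) (hac : ¬ AcyclicIn E S) :
    crankIn E S = 1 + sInf {m | ∃ v ∈ S, crankIn E (S.erase v) = m} := by
  obtain ⟨n, hn⟩ : ∃ n, S.card = n + 1 :=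
    Nat.exists_eq_add_one.2 (nonempty_of_not_acyclicIn hac).card_pos
  have hfuel : ∀ v ∈ S, crankAux E n (S.erase v) = crankIn E (S.erase v) := fun v hv =>
    crankAux_congr_fuel (by rw [Finset.card_erase_of_mem hv]; omega) le_rfl
  rw [crankIn, hn]
  simp only [crankAux, if_neg hac, if_pos hsc]
  congr 2
  ext k
  simp only [Set.mem_ofPred_eq]
  refine exists_congr fun v => and_congr_right fun hv => ?_
  rw [hfuel v hv]

theorem crankIn_of_not_stronglyConnIn (hsc : ¬ StronglyConnIn E S) (hac : ¬ AcyclicIn E S) :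
    crankIn E S = S.sup fun v => crankIn E (sccOf E S v) := by
  obtain ⟨n, hn⟩ : ∃ n, S.card = n + 1 :=
    Nat.exists_eq_add_one.2 (nonempty_of_not_acyclicIn hac).card_pos
  rw [crankIn, hn]
  simp only [crankAux, if_neg hac, if_neg hsc]
  exact Finset.sup_congr rfl fun v hv => crankAux_congr_fuel
    (by have := Finset.card_lt_card (sccOf_ssubset hsc v); omega) le_rfl

theorem crankIn_eq_sup_sccOf (S : Finset V) :
    crankIn E S = S.sup fun v => crankIn E (sccOf E S v) := by
  by_cases hac : AcyclicIn E S
  · rw [crankIn_of_acyclicIn hac]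
    exact (Finset.sup_bot S).symm.trans <| Finset.sup_congr rfl fun v _ =>
      (crankIn_of_acyclicIn (hac.mono (sccOf_subset S v))).symm
  by_cases hsc : StronglyConnIn E S
  · obtain ⟨a, ha⟩ := nonempty_of_not_acyclicIn hac
    rw [Finset.sup_congr rfl fun v hv => congrArg (crankIn E) (hsc.sccOf_eq hv),
      Finset.sup_const ⟨a, ha⟩]
  · exact crankIn_of_not_stronglyConnIn hsc hac

theorem crankIn_le_iff_forall_sccOf {h : ℕ} : crankIn E S ≤ h ↔
    ∀ v ∈ S, HasEdgeIn E (sccOf E S v) → crankIn E (sccOf E S v) ≤ h := by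
  rw [crankIn_eq_sup_sccOf, Finset.sup_le_iff]
  refine forall₂_congr fun v _ => ⟨fun hv _ => hv, fun hv => ?_⟩
  by_cases he : HasEdgeIn E (sccOf E S v)
  · exact hv he
  · simp [crankIn_of_acyclicIn (acyclicIn_of_not_hasEdgeIn he)]

theorem crankIn_sccOf_le {v : V} (hv : v ∈ S) : crankIn E (sccOf E S v) ≤ crankIn E S := by
  rw [crankIn_eq_sup_sccOf S]
  exact Finset.le_sup (f := fun v => crankIn E (sccOf E S v)) hv

theorem crankIn_le_crankIn_erase_add_one (hsc : StronglyConnIn E S) (he : HasEdgeIn E S)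
    {x : V} (hx : x ∈ S) : crankIn E S ≤ crankIn E (S.erase x) + 1 := by
  have hmin : sInf {m | ∃ v ∈ S, crankIn E (S.erase v) = m} ≤ crankIn E (S.erase x) :=
    Nat.sInf_le ⟨x, hx, rfl⟩
  rw [crankIn_of_stronglyConnIn hsc (hsc.not_acyclicIn he)]
  omega

theorem exists_crankIn_eq_crankIn_erase_add_one (hsc : StronglyConnIn E S)
    (he : HasEdgeIn E S) : ∃ x ∈ S, crankIn E S = crankIn E (S.erase x) + 1 := by
  have hac := hsc.not_acyclicIn he
  obtain ⟨a, ha, -⟩ := he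
  obtain ⟨x, hx, hxmin⟩ := Nat.sInf_mem (s := {m | ∃ v ∈ S, crankIn E (S.erase v) = m})
    ⟨_, a, ha, rfl⟩
  exact ⟨x, hx, by rw [crankIn_of_stronglyConnIn hsc hac, ← hxmin, add_comm]⟩

theorem ElimTreeHLe.mono {x : V} {X : Finset V} {h h' : ℕ} (t : ElimTreeHLe E x X h)
    (hh : h ≤ h') : ElimTreeHLe E x X h' := by
  induction t generalizing h' with
  | node x X h hx hsc hnt y hmem _ ih =>
    obtain ⟨k, rfl⟩ : ∃ k, h' = k + 1 := ⟨h' - 1, by omega⟩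
    exact .node x X k hx hsc hnt y hmem fun v hv he => ih v hv he (by omega)

theorem ElimTreeHLe.crankIn_le {x : V} {X : Finset V} {h : ℕ} (t : ElimTreeHLe E x X h) :
    crankIn E X ≤ h := by
  induction t with
  | node x X h hx hsc hnt _ _ _ ih =>
    have herase : crankIn E (X.erase x) ≤ h := crankIn_le_iff_forall_sccOf.2 ih
    exact (crankIn_le_crankIn_erase_add_one hsc hnt hx).trans (by omega)

theorem exists_elimTreeHLe_crankIn (hsc : StronglyConnIn E S) (he : HasEdgeIn E S) :
    ∃ x ∈ S, ElimTreeHLe E x S (crankIn E S) := by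
  induction S using Finset.strongInduction with
  | H S ih =>
    obtain ⟨x, hx, hcrank⟩ := exists_crankIn_eq_crankIn_erase_add_one hsc he
    have hchild : ∀ v ∈ S.erase x, HasEdgeIn E (sccOf E (S.erase x) v) →
        ∃ y ∈ sccOf E (S.erase x) v,
          ElimTreeHLe E y (sccOf E (S.erase x) v) (crankIn E (S.erase x)) := by
      intro v hv hev
      obtain ⟨y, hy, t⟩ := ih _ ((sccOf_subset _ v).trans_ssubset (Finset.erase_ssubset hx))
        (sccOf_stronglyConnIn _ v) hev
      exact ⟨y, hy, t.mono (crankIn_sccOf_le hv)⟩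
    choose! y hy t using hchild
    exact ⟨x, hx, hcrank ▸ .node x S _ hx hsc he y hy t⟩

theorem exists_elimTreeHLe_iff (hsc : StronglyConnIn E S) (he : HasEdgeIn E S) {h : ℕ} :
    (∃ x ∈ S, ElimTreeHLe E x S h) ↔ crankIn E S ≤ h := by
  refine ⟨fun ⟨_, _, t⟩ => t.crankIn_le, fun hle => ?_⟩
  obtain ⟨x, hx, t⟩ := exists_elimTreeHLe_crankIn hsc he
  exact ⟨x, hx, t.mono hle⟩

theorem elimForestHLe_iff [Fintype V] {h : ℕ} : ElimForestHLe E h ↔ crank E ≤ h := by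
  rw [crank_eq_crankIn_univ, crankIn_le_iff_forall_sccOf]
  refine forall_congr' fun v => ?_
  simp only [Finset.mem_univ, true_imp_iff]
  exact imp_congr_right fun he => exists_elimTreeHLe_iff (sccOf_stronglyConnIn _ v) he

end CycleRank

/-- The minimum height among all directed elimination forests for a digraph `G`
equals the cycle rank of `G`. -/
theorem min_elimForest_height_eq_crank {V : Type*} [DecidableEq V] [Fintype V]
    (E : V → V → Prop) :
    sInf {h : ℕ | ElimForestHLe E h} = crank E := by
  have hforest : {h : ℕ | ElimForestHLe E h} = Set.Ici (crank E) :=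
    Set.ext fun _ => elimForestHLe_iff
  rw [hforest, csInf_Ici]
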